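/- arXiv:1703.03391 — 6 statements merged into one kernel-verified Lean document; each statement's English description precedes it below -/
import Mathlib

section
/- For every first-order formula φ (built from atoms, equality, conjunction, negation, and existential quantification) and every set 𝓜 of pairs (M,f) of a structure and an assignment, 𝓜 satisfies φ positively under the model-set semantics (where 𝓜 ⊨⁺ for atoms means all members satisfy the atom, ⊨⁺ for ¬φ is 𝓜 ⊨⁻ φ, ⊨⁺ for ∃x φ uses a choice function, ⊨⁻ for conjunction splits 𝓜 into a union of two sets, and ⊨⁻ for ∃x φ extends every assignment by every element) if and only if every pair (M,f) ∈ 𝓜 satisfies φ in the standard Tarskian sense. -/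
/-- A τ-model together with an assignment: carrier `U`, a domain `dom ⊆ U`,
interpretations of the relation symbols, and an assignment of variables. -/
structure Model (U : Type) (Rel : Type) (ar : Rel → ℕ) where
  dom : Set U
  rel : ∀ r : Rel, (Fin (ar r) → U) → Prop
  asg : ℕ → U

/-- First-order formulas over a relational signature (variables are `ℕ`). -/
inductive Fml (Rel : Type) (ar : Rel → ℕ) : Type where
  | atom (r : Rel) (v : Fin (ar r) → ℕ)
  | eq (x y : ℕ)
  | and (φ ψ : Fml Rel ar)
  | not (φ : Fml Rel ar)
  | ex (x : ℕ) (φ : Fml Rel ar)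

variable {U : Type} {Rel : Type} {ar : Rel → ℕ}

def upd (f : ℕ → U) (x : ℕ) (a : U) : ℕ → U :=
  fun n => if n = x then a else f n

/-- Modify the assignment of a model at variable `x`. -/
def setVar (M : Model U Rel ar) (x : ℕ) (a : U) : Model U Rel ar :=
  { M with asg := upd M.asg x a }

/-- Standard Tarskian satisfaction. -/
def Tarski : Model U Rel ar → Fml Rel ar → Prop
  | M, .atom r v => M.rel r (fun i => M.asg (v i))
  | M, .eq x y => M.asg x = M.asg y
  | M, .and φ ψ => Tarski M φ ∧ Tarski M ψ
  | M, .not φ => ¬ Tarski M φ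
  | M, .ex x φ => ∃ a ∈ M.dom, Tarski (setVar M x a) φ

/-- `𝓜[F/x]` for a choice function `F`. -/
def updSet (𝓜 : Set (Model U Rel ar)) (x : ℕ) (F : Model U Rel ar → U) :
    Set (Model U Rel ar) :=
  (fun M => setVar M x (F M)) '' 𝓜

/-- `𝓜[⊤/x]`: extend every assignment by every element of the respective domain. -/
def topSet (𝓜 : Set (Model U Rel ar)) (x : ℕ) : Set (Model U Rel ar) :=
  { N | ∃ M ∈ 𝓜, ∃ b ∈ M.dom, N = setVar M x b }

/-- Model-set semantics: `Sat true φ 𝓜` is `𝓜 ⊨⁺ φ` and `Sat false φ 𝓜` is `𝓜 ⊨⁻ φ`. -/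
def Sat : Bool → Fml Rel ar → Set (Model U Rel ar) → Prop
  | pos, .atom r v, 𝓜 => ∀ M ∈ 𝓜, (M.rel r (fun i => M.asg (v i)) ↔ pos = true)
  | pos, .eq x y, 𝓜 => ∀ M ∈ 𝓜, (M.asg x = M.asg y ↔ pos = true)
  | true, .and φ ψ, 𝓜 => Sat true φ 𝓜 ∧ Sat true ψ 𝓜
  | false, .and φ ψ, 𝓜 =>
      ∃ 𝓜' 𝓜'', 𝓜' ∪ 𝓜'' = 𝓜 ∧ Sat false φ 𝓜' ∧ Sat false ψ 𝓜''
  | pos, .not φ, 𝓜 => Sat (!pos) φ 𝓜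
  | true, .ex x φ, 𝓜 =>
      ∃ F : Model U Rel ar → U, (∀ M ∈ 𝓜, F M ∈ M.dom) ∧ Sat true φ (updSet 𝓜 x F)
  | false, .ex x φ, 𝓜 => Sat false φ (topSet 𝓜 x)

theorem modelSet_both (φ : Fml Rel ar) : ∀ 𝓜 : Set (Model U Rel ar),
    (Sat true φ 𝓜 ↔ ∀ M ∈ 𝓜, Tarski M φ) ∧
    (Sat false φ 𝓜 ↔ ∀ M ∈ 𝓜, ¬ Tarski M φ) := by
  classical
  induction φ with
  | atom r v =>
    intro 𝓜
    constructor <;> · simp [Sat, Tarski]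
  | eq x y =>
    intro 𝓜
    constructor <;> · simp [Sat, Tarski]
  | and φ ψ ihφ ihψ =>
    intro 𝓜
    constructor
    · simp only [Sat, Tarski, (ihφ 𝓜).1, (ihψ 𝓜).1]
      constructor
      · rintro ⟨h1, h2⟩ M hM; exact ⟨h1 M hM, h2 M hM⟩
      · intro h; exact ⟨fun M hM => (h M hM).1, fun M hM => (h M hM).2⟩
    · constructor
      · rintro ⟨A, B, hU, hA, hB⟩ M hM hT
        rw [(ihφ A).2] at hA
        rw [(ihψ B).2] at hB
        have : M ∈ A ∪ B := hU ▸ hM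
        rcases this with h | h
        · exact hA M h hT.1
        · exact hB M h hT.2
      · intro h
        refine ⟨{M ∈ 𝓜 | ¬ Tarski M φ}, {M ∈ 𝓜 | ¬ Tarski M ψ}, ?_, ?_, ?_⟩
        · ext M
          constructor
          · rintro (⟨h1, _⟩ | ⟨h1, _⟩) <;> exact h1
          · intro hM
            by_cases hφ : Tarski M φ
            · right; exact ⟨hM, fun hψ => h M hM ⟨hφ, hψ⟩⟩
            · left; exact ⟨hM, hφ⟩
        · rw [(ihφ _).2]; intro M hM; exact hM.2
        · rw [(ihψ _).2]; intro M hM; exact hM.2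
  | not φ ih =>
    intro 𝓜
    constructor
    · show Sat false φ 𝓜 ↔ _
      rw [(ih 𝓜).2]; rfl
    · show Sat true φ 𝓜 ↔ _
      rw [(ih 𝓜).1]
      simp only [Tarski, not_not]
  | ex x φ ih =>
    intro 𝓜
    constructor
    · constructor
      · rintro ⟨F, hF, hSat⟩ M hM
        rw [(ih _).1] at hSat
        exact ⟨F M, hF M hM, hSat _ ⟨M, hM, rfl⟩⟩
      · intro h
        refine ⟨fun M => if hM : ∃ a ∈ M.dom, Tarski (setVar M x a) φ
            then hM.choose else M.asg 0, ?_, ?_⟩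
        · intro M hM
          have hW : ∃ a ∈ M.dom, Tarski (setVar M x a) φ := h M hM
          simp only [dif_pos hW]
          exact hW.choose_spec.1
        · rw [(ih _).1]
          rintro _ ⟨M, hM, rfl⟩
          have hW : ∃ a ∈ M.dom, Tarski (setVar M x a) φ := h M hM
          simp only [dif_pos hW]
          exact hW.choose_spec.2
    · show Sat false φ (topSet 𝓜 x) ↔ _
      rw [(ih _).2]
      constructor
      · rintro h M hM ⟨a, ha, hT⟩
        exact h _ ⟨M, hM, a, ha, rfl⟩ hT
      · rintro h N ⟨M, hM, b, hb, rfl⟩ hT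
        exact h M hM ⟨b, hb, hT⟩

/-- Flatness for positive satisfaction: `𝓜 ⊨⁺ φ` iff every member Tarski-satisfies `φ`. -/
theorem modelSet_pos_iff_forall_tarski (φ : Fml Rel ar) (𝓜 : Set (Model U Rel ar)) :
    Sat true φ 𝓜 ↔ ∀ M ∈ 𝓜, Tarski M φ := by
  exact (modelSet_both φ 𝓜).1
end

section
/- For every first-order formula φ and every single pair (M,f), the singleton model set {(M,f)} satisfies φ positively under model-set semantics if and only if (M,f) ⊨ φ in the standard Tarskian sense, and {(M,f)} satisfies φ negatively if and only if (M,f) ⊭ φ. -/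
variable {U : Type} {Rel : Type} {ar : Rel → ℕ}

theorem sat_iff_forall (φ : Fml Rel ar) :
    ∀ 𝓜 : Set (Model U Rel ar),
    (Sat true φ 𝓜 ↔ ∀ N ∈ 𝓜, Tarski N φ) ∧
    (Sat false φ 𝓜 ↔ ∀ N ∈ 𝓜, ¬ Tarski N φ) := by
  induction φ with
  | atom r v =>
    intro 𝓜
    constructor <;> simp [Sat, Tarski]
  | eq x y =>
    intro 𝓜
    constructor <;> simp [Sat, Tarski]
  | and φ ψ ihφ ihψ =>
    intro 𝓜
    constructor
    · rw [show Sat true (φ.and ψ) 𝓜 = (Sat true φ 𝓜 ∧ Sat true ψ 𝓜) from rfl]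
      rw [(ihφ 𝓜).1, (ihψ 𝓜).1]
      constructor
      · rintro ⟨h1, h2⟩ N hN; exact ⟨h1 N hN, h2 N hN⟩
      · intro h; exact ⟨fun N hN => (h N hN).1, fun N hN => (h N hN).2⟩
    · rw [show Sat false (φ.and ψ) 𝓜 =
        (∃ 𝓜' 𝓜'', 𝓜' ∪ 𝓜'' = 𝓜 ∧ Sat false φ 𝓜' ∧ Sat false ψ 𝓜'') from rfl]
      constructor
      · rintro ⟨𝓜', 𝓜'', hu, h1, h2⟩ N hN
        rw [← hu] at hN
        rcases hN with hN | hN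
        · exact fun ⟨hA, _⟩ => ((ihφ 𝓜').2.1 h1 N hN) hA
        · exact fun ⟨_, hB⟩ => ((ihψ 𝓜'').2.1 h2 N hN) hB
      · intro h
        refine ⟨{N ∈ 𝓜 | ¬ Tarski N φ}, {N ∈ 𝓜 | ¬ Tarski N ψ}, ?_, ?_, ?_⟩
        · ext N
          simp only [Set.mem_union, Set.mem_setOf_eq]
          constructor
          · rintro (⟨h1, _⟩ | ⟨h1, _⟩) <;> exact h1
          · intro hN
            rcases not_and_or.mp (h N hN) with h1 | h1
            · exact Or.inl ⟨hN, h1⟩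
            · exact Or.inr ⟨hN, h1⟩
        · exact (ihφ _).2.2 (fun N hN => hN.2)
        · exact (ihψ _).2.2 (fun N hN => hN.2)
  | not φ ih =>
    intro 𝓜
    constructor
    · rw [show Sat true (φ.not) 𝓜 = Sat false φ 𝓜 from rfl, (ih 𝓜).2]
      exact Iff.rfl
    · rw [show Sat false (φ.not) 𝓜 = Sat true φ 𝓜 from rfl, (ih 𝓜).1]
      simp [Tarski]
  | ex x φ ih =>
    intro 𝓜
    constructor
    · rw [show Sat true (Fml.ex x φ) 𝓜 =
        (∃ F : Model U Rel ar → U, (∀ M ∈ 𝓜, F M ∈ M.dom) ∧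
          Sat true φ (updSet 𝓜 x F)) from rfl]
      constructor
      · rintro ⟨F, hF, hS⟩ N hN
        refine ⟨F N, hF N hN, ?_⟩
        exact (ih _).1.1 hS _ ⟨N, hN, rfl⟩
      · intro h
        classical
        refine ⟨fun N =>
          if hc : ∃ a ∈ N.dom, Tarski (setVar N x a) φ then hc.choose else N.asg 0,
          ?_, ?_⟩
        · intro N hN
          have hc : ∃ a ∈ N.dom, Tarski (setVar N x a) φ := h N hN
          simp only [dif_pos hc]
          exact hc.choose_spec.1
        · apply (ih _).1.2
          rintro _ ⟨N, hN, rfl⟩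
          have hc : ∃ a ∈ N.dom, Tarski (setVar N x a) φ := h N hN
          simp only [dif_pos hc]
          exact hc.choose_spec.2
    · rw [show Sat false (Fml.ex x φ) 𝓜 = Sat false φ (topSet 𝓜 x) from rfl,
        (ih _).2]
      constructor
      · rintro h N hN ⟨a, ha, hT⟩
        exact h _ ⟨N, hN, a, ha, rfl⟩ hT
      · rintro h _ ⟨N, hN, a, ha, rfl⟩ hT
        exact h N hN ⟨a, ha, hT⟩

/-- On singleton model sets, `⊨⁺` agrees with Tarskian satisfaction
and `⊨⁻` with Tarskian refutation. -/
theorem singleton_pos_neg_iff (φ : Fml Rel ar) (M : Model U Rel ar) :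
    (Sat true φ ({M} : Set (Model U Rel ar)) ↔ Tarski M φ) ∧
    (Sat false φ ({M} : Set (Model U Rel ar)) ↔ ¬ Tarski M φ) := by
  obtain ⟨h1, h2⟩ := sat_iff_forall φ ({M} : Set (Model U Rel ar))
  simp only [Set.mem_singleton_iff, forall_eq] at h1 h2
  exact ⟨h1, h2⟩
end

section
/- There is a model set 𝓜 consisting of exactly two structures with disjoint domains such that 𝓜 ⊨⁺ Cx(x=x) ∨ Cx(x=x) (where ∨ abbreviates ¬(¬·∧¬·)) while 𝓜 ⊭⁺ Cx(x=x). In particular, the formula ψ∨ψ is not equivalent to ψ in the model-set semantics of L_C*. -/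
variable {U : Type} {Rel : Type} {ar : Rel → ℕ}

/-- Formulas of `L_C*`: first-order logic extended with the quantifier `Cx`. -/
inductive FmlC (Rel : Type) (ar : Rel → ℕ) : Type where
  | atom (r : Rel) (v : Fin (ar r) → ℕ)
  | eq (x y : ℕ)
  | and (φ ψ : FmlC Rel ar)
  | not (φ : FmlC Rel ar)
  | ex (x : ℕ) (φ : FmlC Rel ar)
  | C (x : ℕ) (φ : FmlC Rel ar)

/-- The common domain of a model set: the intersection of all domains. -/
def commonDom (𝓜 : Set (Model U Rel ar)) : Set U :=
  { a | ∀ M ∈ 𝓜, a ∈ M.dom }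

/-- `𝓜[A/x]`: extend every assignment by every element of `A`. -/
def subSet (𝓜 : Set (Model U Rel ar)) (x : ℕ) (A : Set U) : Set (Model U Rel ar) :=
  { N | ∃ M ∈ 𝓜, ∃ b ∈ A, N = setVar M x b }

/-- Model-set semantics for `L_C*`: `SatC true φ 𝓜` is `𝓜 ⊨⁺ φ`, `SatC false φ 𝓜`
is `𝓜 ⊨⁻ φ`.  `Cx` is interpreted positively by a constant choice function into the
common domain, and negatively via all extensions by elements of the common domain. -/
def SatC : Bool → FmlC Rel ar → Set (Model U Rel ar) → Prop
  | pos, .atom r v, 𝓜 => ∀ M ∈ 𝓜, (M.rel r (fun i => M.asg (v i)) ↔ pos = true)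
  | pos, .eq x y, 𝓜 => ∀ M ∈ 𝓜, (M.asg x = M.asg y ↔ pos = true)
  | true, .and φ ψ, 𝓜 => SatC true φ 𝓜 ∧ SatC true ψ 𝓜
  | false, .and φ ψ, 𝓜 =>
      ∃ 𝓜' 𝓜'', 𝓜' ∪ 𝓜'' = 𝓜 ∧ SatC false φ 𝓜' ∧ SatC false ψ 𝓜''
  | pos, .not φ, 𝓜 => SatC (!pos) φ 𝓜
  | true, .ex x φ, 𝓜 =>
      ∃ F : Model U Rel ar → U, (∀ M ∈ 𝓜, F M ∈ M.dom) ∧ SatC true φ (updSet 𝓜 x F)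
  | false, .ex x φ, 𝓜 => SatC false φ (topSet 𝓜 x)
  | true, .C x φ, 𝓜 =>
      ∃ a : U, (∀ M ∈ 𝓜, a ∈ M.dom) ∧ SatC true φ (updSet 𝓜 x (fun _ => a))
  | false, .C x φ, 𝓜 => SatC false φ (subSet 𝓜 x (commonDom 𝓜))

/-- Disjunction of `L_C*`, defined as `¬(¬φ ∧ ¬ψ)`. -/
def orC (φ ψ : FmlC Rel ar) : FmlC Rel ar := .not (.and (.not φ) (.not ψ))

/-- There is a model set consisting of exactly two structures with disjoint domains
satisfying `Cx(x=x) ∨ Cx(x=x)` positively but not `Cx(x=x)`; hence `ψ ∨ ψ` is not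
equivalent to `ψ` in the model-set semantics of `L_C*`. -/
theorem or_idempotence_fails :
    ∃ (M₁ M₂ : Model Bool Empty (fun e => e.elim)),
      M₁ ≠ M₂ ∧ Disjoint M₁.dom M₂.dom ∧
      SatC true (orC (.C 0 (.eq 0 0)) (.C 0 (.eq 0 0)))
        ({M₁, M₂} : Set (Model Bool Empty (fun e => e.elim))) ∧
      ¬ SatC true (.C 0 (.eq 0 0))
        ({M₁, M₂} : Set (Model Bool Empty (fun e => e.elim))) := by
  refine ⟨⟨{false}, fun e => e.elim, fun _ => false⟩,
         ⟨{true}, fun e => e.elim, fun _ => false⟩, ?_, ?_, ?_, ?_⟩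
  · intro h
    have : ({false} : Set Bool) = {true} := congrArg Model.dom h
    simpa using congrArg (false ∈ ·) this
  · simp [Set.disjoint_left]
  · -- positive satisfaction of the disjunction: split as {M₁} ∪ {M₂}
    refine ⟨{⟨{false}, fun e => e.elim, fun _ => false⟩},
            {⟨{true}, fun e => e.elim, fun _ => false⟩}, rfl, ?_, ?_⟩
    · exact ⟨false, by rintro M rfl; simp [Set.mem_singleton_iff], fun M _ => by simp⟩
    · exact ⟨true, by rintro M rfl; simp [Set.mem_singleton_iff], fun M _ => by simp⟩
  · rintro ⟨a, ha, -⟩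
    have h1 := ha _ (Set.mem_insert _ _)
    have h2 := ha _ (Set.mem_insert_of_mem _ rfl)
    simp only [Set.mem_singleton_iff] at h1 h2
    exact absurd (h1.symm.trans h2) (by simp)
end

section
/- Let T be the translation from L_C into first-order logic defined by T(Rx₁…x_k)=Rx₁…x_k, T(x=y)=(x=y), T(¬φ)=¬T(φ), T(φ∧ψ)=T(φ)∧T(ψ), T(∃xφ)=∃xT(φ), and T(Cxφ)=∃x(Dx ∧ T(φ)) for a fresh unary predicate D. Then a sentence φ of L_C is satisfied positively by some nonempty model set if and only if T(φ) is satisfiable by some single structure in the ordinary first-order sense. -/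
variable {U : Type} {Rel : Type} {ar : Rel → ℕ}

/-- No occurrence of `Cx` at all. -/
def CFree : FmlC Rel ar → Prop
  | .atom _ _ => True
  | .eq _ _ => True
  | .and φ ψ => CFree φ ∧ CFree ψ
  | .not φ => CFree φ
  | .ex _ φ => CFree φ
  | .C _ _ => False

/-- Membership in the fragment `L_C`: `Cx` never occurs in the scope of a negation. -/
def LC : FmlC Rel ar → Prop
  | .atom _ _ => True
  | .eq _ _ => True
  | .and φ ψ => LC φ ∧ LC ψ
  | .not φ => CFree φ
  | .ex _ φ => LC φ
  | .C _ φ => LC φ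

/-- Free variables of an `L_C*`-formula. -/
def fv : FmlC Rel ar → Set ℕ
  | .atom _ v => Set.range v
  | .eq x y => {x, y}
  | .and φ ψ => fv φ ∪ fv ψ
  | .not φ => fv φ
  | .ex x φ => fv φ \ {x}
  | .C x φ => fv φ \ {x}

/-- The signature extended by a fresh unary predicate `D` (the symbol `none`). -/
def arD (ar : Rel → ℕ) : Option Rel → ℕ
  | none => 1
  | some r => ar r

/-- The translation `T` from `L_C` into first-order logic over the extended signature:
identity on first-order constructors, `T(Cxφ) = ∃x(Dx ∧ T(φ))`. -/
def T : FmlC Rel ar → Fml (Option Rel) (arD ar)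
  | .atom r v => .atom (some r) v
  | .eq x y => .eq x y
  | .and φ ψ => .and (T φ) (T ψ)
  | .not φ => .not (T φ)
  | .ex x φ => .ex x (T φ)
  | .C x φ => .ex x (.and (.atom none (fun _ => x)) (T φ))

/-- Expand a model by interpreting the fresh predicate `D` as the set `A`. -/
def expand (A : Set U) (M : Model U Rel ar) : Model U (Option Rel) (arD ar) where
  dom := M.dom
  rel := fun o => match o with
    | none => fun v => v ⟨0, Nat.one_pos⟩ ∈ A
    | some r => M.rel r
  asg := M.asg

/-- `𝓜_D`: expand every structure of `𝓜` by interpreting `D` as the common domain. -/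
def expandSet (𝓜 : Set (Model U Rel ar)) : Set (Model U (Option Rel) (arD ar)) :=
  expand (commonDom 𝓜) '' 𝓜

/-- Forget the predicate `D` of a model over the extended signature. -/
def restrict (M : Model U (Option Rel) (arD ar)) : Model U Rel ar where
  dom := M.dom
  rel := fun r => M.rel (some r)
  asg := M.asg

/-!
Formulas without `C` are flat: `𝓜 ⊨⁺ φ` iff every structure of `𝓜` satisfies `φ`, and
`𝓜 ⊨⁻ φ` iff none does. In `L_C` negation meets only such formulas, so an induction shows
that `𝓜 ⊨⁺ φ` makes every structure of `𝓜_D` satisfy `T φ`: the constant witness of `Cx`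
lies in the common domain, which is `D`. Conversely a model of `T φ` gives a singleton
model set, whose common domain is the whole domain, so every witness of `D x` is admissible
for `Cx`.
-/

theorem exists_union_eq_and_forall_iff {α : Type*} (S : Set α) (P Q : α → Prop) :
    (∃ S' S'', S' ∪ S'' = S ∧ (∀ a ∈ S', P a) ∧ ∀ a ∈ S'', Q a) ↔ ∀ a ∈ S, P a ∨ Q a := by
  constructor
  · rintro ⟨S', S'', rfl, hP, hQ⟩ a (ha | ha)
    exacts [Or.inl (hP a ha), Or.inr (hQ a ha)]
  · intro h
    refine ⟨{a ∈ S | P a}, {a ∈ S | ¬ P a}, ?_, fun a ha => ha.2,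
      fun a ha => (h a ha.1).resolve_left ha.2⟩
    ext a
    by_cases hP : P a <;> simp [hP]

lemma expand_setVar (A : Set U) (M : Model U Rel ar) (x : ℕ) (a : U) :
    expand A (setVar M x a) = setVar (expand A M) x a := rfl

lemma restrict_setVar (M : Model U (Option Rel) (arD ar)) (x : ℕ) (a : U) :
    restrict (setVar M x a) = setVar (restrict M) x a := rfl

lemma expand_restrict (M : Model U (Option Rel) (arD ar)) :
    expand {u | M.rel none (fun _ => u)} (restrict M) = M := by
  obtain ⟨dom, rel, asg⟩ := M
  simp only [expand, restrict, Model.mk.injEq, and_true, true_and]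
  funext o
  cases o with
  | none =>
    funext v
    show rel none (fun _ => v ⟨0, Nat.one_pos⟩) = rel none v
    congr 1
    funext i
    exact congrArg v (Fin.fin_one_eq_zero (i : Fin 1)).symm
  | some r => rfl

lemma commonDom_updSet (𝓜 : Set (Model U Rel ar)) (x : ℕ) (F : Model U Rel ar → U) :
    commonDom (updSet 𝓜 x F) = commonDom 𝓜 := by
  ext b
  simp [commonDom, updSet, setVar]

lemma updSet_singleton (M : Model U Rel ar) (x : ℕ) (F : Model U Rel ar → U) :
    updSet {M} x F = {setVar M x (F M)} :=
  Set.image_singleton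

lemma forall_mem_topSet_iff (𝓜 : Set (Model U Rel ar)) (x : ℕ) (P : Model U Rel ar → Prop) :
    (∀ N ∈ topSet 𝓜 x, P N) ↔ ∀ M ∈ 𝓜, ∀ a ∈ M.dom, P (setVar M x a) := by
  constructor
  · exact fun h M hM a ha => h _ ⟨M, hM, a, ha, rfl⟩
  · rintro h _ ⟨M, hM, a, ha, rfl⟩
    exact h M hM a ha

lemma exists_choice_forall_updSet_iff (𝓜 : Set (Model U Rel ar)) (x : ℕ)
    (P : Model U Rel ar → Prop) :
    (∃ F : Model U Rel ar → U, (∀ M ∈ 𝓜, F M ∈ M.dom) ∧ ∀ N ∈ updSet 𝓜 x F, P N) ↔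
      ∀ M ∈ 𝓜, ∃ a ∈ M.dom, P (setVar M x a) := by
  constructor
  · rintro ⟨F, hF, hP⟩ M hM
    exact ⟨F M, hF M hM, hP _ ⟨M, hM, rfl⟩⟩
  · intro h
    classical
    -- `M.asg 0` is only a default value, for structures without a witness
    let F : Model U Rel ar → U := fun M =>
      if hM : ∃ a ∈ M.dom, P (setVar M x a) then hM.choose else M.asg 0
    have hF : ∀ M ∈ 𝓜, F M ∈ M.dom ∧ P (setVar M x (F M)) := fun M hM => by
      simp only [F, dif_pos (h M hM)]
      exact (h M hM).choose_spec
    exact ⟨F, fun M hM => (hF M hM).1, by rintro _ ⟨M, hM, rfl⟩; exact (hF M hM).2⟩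

theorem satC_iff_tarski_T_of_cFree {φ : FmlC Rel ar} (h : CFree φ) (pos : Bool)
    (𝓜 : Set (Model U Rel ar)) (A : Set U) :
    SatC pos φ 𝓜 ↔ ∀ M ∈ 𝓜, (Tarski (expand A M) (T φ) ↔ pos = true) := by
  induction φ generalizing pos 𝓜 with
  | atom r v | eq x y => cases pos <;> rfl
  | and φ ψ ihφ ihψ =>
    cases pos with
    | true =>
      simp only [SatC, ihφ h.1, ihψ h.2, T, Tarski, iff_true]
      exact forall₂_and.symm
    | false =>
      simp only [SatC, ihφ h.1, ihψ h.2, T, Tarski, iff_false, Bool.false_eq_true, not_and_or]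
      exact exists_union_eq_and_forall_iff _ _ _
  | not φ ih =>
    cases pos <;> simp [SatC, ih h, T, Tarski]
  | ex x φ ih =>
    cases pos with
    | true =>
      simp only [SatC, ih h, T, Tarski, iff_true, ← expand_setVar]
      exact exists_choice_forall_updSet_iff _ _ _
    | false =>
      simp only [SatC, ih h, T, Tarski, iff_false, Bool.false_eq_true, not_exists, not_and,
        ← expand_setVar]
      exact forall_mem_topSet_iff _ _ _
  | C => exact h.elim

/-- Along the induction `𝓜` changes only by updating assignments, which keeps its common
domain. -/
theorem tarski_T_of_satC_true {φ : FmlC Rel ar} (h : LC φ) {𝓜 : Set (Model U Rel ar)}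
    (hφ : SatC true φ 𝓜) {M : Model U Rel ar} (hM : M ∈ 𝓜) :
    Tarski (expand (commonDom 𝓜) M) (T φ) := by
  induction φ generalizing 𝓜 M with
  | atom r v | eq x y => exact (hφ M hM).mpr rfl
  | and φ ψ ihφ ihψ => exact ⟨ihφ h.1 hφ.1 hM, ihψ h.2 hφ.2 hM⟩
  | not φ =>
    exact fun hT => Bool.false_ne_true
      (((satC_iff_tarski_T_of_cFree h false 𝓜 (commonDom 𝓜)).mp hφ M hM).mp hT)
  | ex x φ ih =>
    obtain ⟨F, hF, hφ⟩ := hφ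
    have := ih h hφ ⟨M, hM, rfl⟩
    rw [commonDom_updSet] at this
    exact ⟨F M, hF M hM, this⟩
  | C x φ ih =>
    obtain ⟨a, ha, hφ⟩ := hφ
    have := ih h hφ ⟨M, hM, rfl⟩
    rw [commonDom_updSet] at this
    refine ⟨a, ha M hM, ?_, this⟩
    show upd M.asg x a x ∈ commonDom 𝓜
    simpa [upd] using show a ∈ commonDom 𝓜 from ha

theorem satC_true_singleton_of_tarski_T {φ : FmlC Rel ar} (h : LC φ)
    {M : Model U (Option Rel) (arD ar)} (hφ : Tarski M (T φ)) :
    SatC true φ {restrict M} := by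
  induction φ generalizing M with
  | atom r v | eq x y => rintro _ rfl; exact iff_of_true hφ rfl
  | and φ ψ ihφ ihψ => exact ⟨ihφ h.1 hφ.1, ihψ h.2 hφ.2⟩
  | not φ =>
    refine (satC_iff_tarski_T_of_cFree h false _ {u | M.rel none (fun _ => u)}).mpr ?_
    rintro _ rfl
    rw [expand_restrict]
    exact iff_of_false hφ Bool.false_ne_true
  | ex x φ ih =>
    obtain ⟨a, ha, hφ⟩ := hφ
    refine ⟨fun _ => a, by rintro _ rfl; exact ha, ?_⟩
    simpa [updSet_singleton, restrict_setVar] using ih h hφ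
  | C x φ ih =>
    obtain ⟨a, ha, -, hφ⟩ := hφ
    refine ⟨a, by rintro _ rfl; exact ha, ?_⟩
    simpa [updSet_singleton, restrict_setVar] using ih h hφ

theorem LC_sat_iff_translation_sat_general {U : Type} (φ : FmlC Rel ar)
    (hLC : LC φ) :
    (∃ 𝓜 : Set (Model U Rel ar), 𝓜.Nonempty ∧ SatC true φ 𝓜) ↔
    (∃ M : Model U (Option Rel) (arD ar), Tarski M (T φ)) := by
  constructor
  · rintro ⟨𝓜, ⟨M, hM⟩, hφ⟩
    exact ⟨expand (commonDom 𝓜) M, tarski_T_of_satC_true hLC hφ hM⟩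
  · rintro ⟨M, hφ⟩
    exact ⟨{restrict M}, Set.singleton_nonempty _, satC_true_singleton_of_tarski_T hLC hφ⟩

/-- A sentence of `L_C` is positively satisfied by some nonempty model set
iff its translation `T(φ)` is satisfiable in the ordinary first-order sense. -/
theorem LC_sat_iff_translation_sat {U : Type} (φ : FmlC Rel ar)
    (hLC : LC φ) (hsent : fv φ = ∅) :
    (∃ 𝓜 : Set (Model U Rel ar), 𝓜.Nonempty ∧ SatC true φ 𝓜) ↔
    (∃ M : Model U (Option Rel) (arD ar), Tarski M (T φ)) :=
  LC_sat_iff_translation_sat_general φ hLC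
end

section
/- If a model set 𝓜 positively satisfies a sentence φ of L_C, then the expanded model set 𝓜_D (in which each structure interprets the fresh unary predicate D as the common domain of 𝓜) positively satisfies the first-order translation T(φ), where T replaces each Cx by ∃x(Dx ∧ ·) and commutes with all other connectives and quantifiers. -/
variable {U : Type} {Rel : Type} {ar : Rel → ℕ}

lemma restrict_expand (A : Set U) (M : Model U Rel ar) : restrict (expand A M) = M := rfl

lemma updSet_expand (A : Set U) (𝓜 : Set (Model U Rel ar)) (x : ℕ)
    (F : Model U Rel ar → U) :
    updSet (expand A '' 𝓜) x (fun N => F (restrict N)) = expand A '' (updSet 𝓜 x F) := by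
  unfold updSet
  rw [Set.image_image, Set.image_image]
  rfl

lemma topSet_expand (A : Set U) (𝓜 : Set (Model U Rel ar)) (x : ℕ) :
    topSet (expand A '' 𝓜) x = expand A '' topSet 𝓜 x := by
  ext N
  constructor
  · rintro ⟨M', ⟨M, hM, rfl⟩, b, hb, rfl⟩
    exact ⟨setVar M x b, ⟨M, hM, b, hb, rfl⟩, rfl⟩
  · rintro ⟨M', ⟨M, hM, b, hb, rfl⟩, rfl⟩
    exact ⟨expand A M, ⟨M, hM, rfl⟩, b, hb, rfl⟩

/-- Negative-polarity lemma: for C-free formulas the translation is satisfied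
in any expansion, with either polarity. -/
lemma sat_cfree (φ : FmlC Rel ar) (hC : CFree φ) :
    ∀ (b : Bool) (𝓜 : Set (Model U Rel ar)) (A : Set U),
      SatC b φ 𝓜 → Sat b (T φ) (expand A '' 𝓜) := by
  induction φ with
  | atom r v =>
    intro b 𝓜 A h
    cases b <;> rintro N ⟨M, hM, rfl⟩ <;> exact h M hM
  | eq x y =>
    intro b 𝓜 A h
    cases b <;> rintro N ⟨M, hM, rfl⟩ <;> exact h M hM
  | and φ ψ ihφ ihψ =>
    intro b 𝓜 A h
    cases b with
    | true => exact ⟨ihφ hC.1 true 𝓜 A h.1, ihψ hC.2 true 𝓜 A h.2⟩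
    | false =>
      obtain ⟨𝓜', 𝓜'', hun, h1, h2⟩ := h
      exact ⟨expand A '' 𝓜', expand A '' 𝓜'',
        by rw [← Set.image_union, hun],
        ihφ hC.1 false 𝓜' A h1, ihψ hC.2 false 𝓜'' A h2⟩
  | not φ ih =>
    intro b 𝓜 A h
    cases b with
    | true => exact ih hC false 𝓜 A h
    | false => exact ih hC true 𝓜 A h
  | ex x φ ih =>
    intro b 𝓜 A h
    cases b with
    | true =>
      obtain ⟨F, hF, hsat⟩ := h
      refine ⟨fun N => F (restrict N), ?_, ?_⟩
      · rintro N ⟨M, hM, rfl⟩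
        exact hF M hM
      · rw [updSet_expand]
        exact ih hC true _ A hsat
    | false =>
      rw [show T (.ex x φ) = .ex x (T φ) from rfl]
      show Sat false (T φ) (topSet (expand A '' 𝓜) x)
      rw [topSet_expand]
      exact ih hC false _ A h
  | C x φ ih => exact absurd hC id

/-- Positive-polarity lemma for `L_C` formulas. -/
lemma sat_lc (φ : FmlC Rel ar) (hLC : LC φ) :
    ∀ (𝓜 : Set (Model U Rel ar)) (A : Set U), commonDom 𝓜 ⊆ A →
      SatC true φ 𝓜 → Sat true (T φ) (expand A '' 𝓜) := by
  induction φ with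
  | atom r v =>
    rintro 𝓜 A hsub h N ⟨M, hM, rfl⟩
    exact h M hM
  | eq x y =>
    rintro 𝓜 A hsub h N ⟨M, hM, rfl⟩
    exact h M hM
  | and φ ψ ihφ ihψ =>
    intro 𝓜 A hsub h
    exact ⟨ihφ hLC.1 𝓜 A hsub h.1, ihψ hLC.2 𝓜 A hsub h.2⟩
  | not φ ih =>
    intro 𝓜 A hsub h
    exact sat_cfree φ hLC false 𝓜 A h
  | ex x φ ih =>
    intro 𝓜 A hsub h
    obtain ⟨F, hF, hsat⟩ := h
    refine ⟨fun N => F (restrict N), ?_, ?_⟩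
    · rintro N ⟨M, hM, rfl⟩
      exact hF M hM
    · rw [updSet_expand]
      exact ih hLC _ A (by rw [commonDom_updSet]; exact hsub) hsat
  | C x φ ih =>
    intro 𝓜 A hsub h
    obtain ⟨a, ha, hsat⟩ := h
    refine ⟨fun _ => a, ?_, ?_, ?_⟩
    · rintro N ⟨M, hM, rfl⟩
      exact ha M hM
    · -- the atom `D x` holds on the updated expanded set
      have : updSet (expand A '' 𝓜) x (fun _ => a)
          = expand A '' (updSet 𝓜 x (fun _ => a)) := updSet_expand A 𝓜 x (fun _ => a)
      rw [this]
      rintro N ⟨M', ⟨M, hM, rfl⟩, rfl⟩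
      refine iff_of_true ?_ rfl
      show upd M.asg x a x ∈ A
      rw [show upd M.asg x a x = a from if_pos rfl]
      exact hsub (fun M hM => ha M hM)
    · have : updSet (expand A '' 𝓜) x (fun _ => a)
          = expand A '' (updSet 𝓜 x (fun _ => a)) := updSet_expand A 𝓜 x (fun _ => a)
      rw [this]
      exact ih hLC _ A (by rw [commonDom_updSet]; exact hsub) hsat

/-- If `𝓜 ⊨⁺ φ` for a sentence `φ` of `L_C`, then the expansion `𝓜_D`
(interpreting `D` as the common domain of `𝓜`) positively satisfies `T(φ)`. -/
theorem expandSet_sat_translation {U : Type} (φ : FmlC Rel ar)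
    (hLC : LC φ) (hsent : fv φ = ∅) (𝓜 : Set (Model U Rel ar))
    (hsat : SatC true φ 𝓜) :
    Sat true (T φ) (expandSet 𝓜) := by
  exact sat_lc φ hLC 𝓜 (commonDom 𝓜) (fun _ h => h) hsat
end

section
/- For every n ≥ 1, the number of functions f : {0,…,n−1} → {0,…,n−1} satisfying f(f(x)) ≠ x for all x (anti-involutive functions) equals ∑_{i=0}^{⌊n/2⌋} (−1)^i (n−1)^{n−2i} C(n,2i) (2i)!/(2^i · i!). -/
/-!
Sieve over partial matchings. For `f : α → α`, sum `sign σ` over the involutions `σ` each of whose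
2-cycles is a 2-cycle of `f`. If `f` has a 2-cycle `(a f(a))`, left multiplication by `swap a (f a)`
toggles it and flips the sign, so the sum is `0`; otherwise only `σ = 1` occurs and the sum is `1`.
Summing over the fixed-point-free `f` therefore counts the anti-involutive functions. Exchanging the
sums, an involution with `i` two-cycles has sign `(-1)^i` and extends to `(n-1)^(n-2i)`
fixed-point-free functions, and by the count of permutations of a given cycle type there are
`C(n,2i) (2i)!/(2^i i!)` such involutions.
-/

open Finset Equiv Nat

theorem Nat.two_pow_mul_factorial_dvd_factorial_two_mul (i : ℕ) : 2 ^ i * i ! ∣ (2 * i)! := by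
  rw [← doubleFactorial_two_mul]
  cases i with
  | zero => simp
  | succ j => exact Dvd.intro _ (factorial_eq_mul_doubleFactorial (2 * j + 1)).symm

namespace Equiv.Perm

variable {α : Type*}

theorem apply_apply_of_sq_eq_one {σ : Perm α} (hσ : σ ^ 2 = 1) (x : α) : σ (σ x) = x := by
  rw [← mul_apply, ← sq, hσ, one_apply]

variable [Fintype α] [DecidableEq α]

theorem sq_eq_one_iff_cycleType_eq_replicate {σ : Perm α} :
    σ ^ 2 = 1 ↔ σ.cycleType = Multiset.replicate σ.cycleType.card 2 := by
  rw [pow_prime_eq_one_iff, Multiset.eq_replicate]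
  simp

theorem sign_of_cycleType_eq_replicate_two {σ : Perm α} {i : ℕ}
    (h : σ.cycleType = Multiset.replicate i 2) : sign σ = (-1) ^ i := by
  simp [sign_of_cycleType', h]

theorem card_support_of_cycleType_eq_replicate_two {σ : Perm α} {i : ℕ}
    (h : σ.cycleType = Multiset.replicate i 2) : #σ.support = 2 * i := by
  rw [← sum_cycleType, h, Multiset.sum_replicate, smul_eq_mul, mul_comm]

theorem sum_sq_eq_one_eq_sum_cycleType {M : Type*} [AddCommMonoid M] (g : Perm α → M) :
    ∑ σ : Perm α with σ ^ 2 = 1, g σ =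
      ∑ i ∈ range (Fintype.card α / 2 + 1),
        ∑ σ : Perm α with σ.cycleType = .replicate i 2, g σ := by
  rw [← sum_fiberwise_of_maps_to (g := fun σ => σ.cycleType.card)]
  · refine sum_congr rfl fun i _ => sum_congr ?_ fun _ _ => rfl
    ext σ
    simp only [mem_filter, mem_univ, true_and, sq_eq_one_iff_cycleType_eq_replicate]
    constructor
    · rintro ⟨h, rfl⟩
      exact h
    · intro h
      simp [h]
  · intro σ hσ
    simp only [mem_filter, mem_univ, true_and, sq_eq_one_iff_cycleType_eq_replicate] at hσ
    have hsum := σ.sum_cycleType_le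
    rw [hσ, Multiset.sum_replicate, smul_eq_mul] at hsum
    rw [mem_range]
    omega

theorem card_cycleType_eq_replicate_two (i : ℕ) :
    #{σ : Perm α | σ.cycleType = .replicate i 2} =
      (Fintype.card α).choose (2 * i) * ((2 * i)! / (2 ^ i * i !)) := by
  have h := card_of_cycleType_mul_eq (α := α) (.replicate i 2)
  have hprod :
      ∏ n ∈ (Multiset.replicate i 2).toFinset, ((Multiset.replicate i 2).count n)! = i ! := by
    rcases i.eq_zero_or_pos with rfl | hi
    · simp
    · simp [Multiset.toFinset_replicate, hi.ne']
  simp only [Multiset.sum_replicate, smul_eq_mul, Multiset.prod_replicate, hprod,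
    Multiset.mem_replicate] at h
  obtain ⟨q, hq⟩ := two_pow_mul_factorial_dvd_factorial_two_mul i
  have hsum : (Multiset.replicate i 2).sum = 2 * i := by simp [mul_comm]
  have hpos : 0 < (Fintype.card α - i * 2)! * 2 ^ i * i ! := by positivity
  rw [hq, Nat.mul_div_cancel_left _ (by positivity)]
  split_ifs at h with hi
  · apply Nat.eq_of_mul_eq_mul_right hpos
    rw [h, ← choose_mul_factorial_mul_factorial (hsum ▸ hi.1), mul_comm i 2, hq]
    ring
  · have hlt : Fintype.card α < 2 * i := by
      by_contra hle
      exact hi ⟨by omega, fun a ha => (Multiset.eq_of_mem_replicate ha).ge⟩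
    rw [choose_eq_zero_of_lt hlt, zero_mul]
    simpa [hpos.ne'] using h

end Equiv.Perm

open Equiv.Perm

variable {α : Type*} [Fintype α] [DecidableEq α]

def involutionsWithin (f : α → α) : Finset (Perm α) :=
  {σ | σ ^ 2 = 1 ∧ ∀ x, σ x = x ∨ σ x = f x}

variable {f : α → α} {σ : Perm α}

theorem mem_involutionsWithin :
    σ ∈ involutionsWithin f ↔ σ ^ 2 = 1 ∧ ∀ x, σ x = x ∨ σ x = f x := by
  simp [involutionsWithin]

theorem involutionsWithin_eq_singleton_one (hf : ∀ x, f (f x) = x → f x = x) :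
    involutionsWithin f = {1} := by
  ext σ
  simp only [mem_involutionsWithin, mem_singleton]
  constructor
  · rintro ⟨hσ, hσf⟩
    ext x
    by_contra hx
    have hσσ := apply_apply_of_sq_eq_one hσ x
    have hσx : σ x = f x := (hσf x).resolve_left hx
    rcases hσf (σ x) with h | h
    · exact hx (hσσ ▸ h).symm
    · exact hx (by rw [one_apply, hσx, hf x (by rw [← hσx, ← h, hσσ])])
  · rintro rfl
    simp

theorem swap_mul_mem_involutionsWithin {a : α} (ha : f (f a) = a)
    (hσ : σ ∈ involutionsWithin f) : swap a (f a) * σ ∈ involutionsWithin f := by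
  rw [mem_involutionsWithin] at hσ ⊢
  obtain ⟨hσ, hσf⟩ := hσ
  have hσσ := apply_apply_of_sq_eq_one hσ
  -- `σ` either swaps `a` and `f a` or fixes both
  have hcomm : σ * swap a (f a) = swap a (f a) * σ := by
    rw [mul_swap_eq_swap_mul]
    rcases hσf a with h | h
    · have hfa : σ (f a) = f a := by grind
      rw [h, hfa]
    · rw [h, ← h, hσσ, swap_comm]
  constructor
  · rw [sq, mul_assoc, ← mul_assoc σ, hcomm, mul_assoc, ← sq, hσ, mul_one, swap_mul_self]
  · intro x
    simp only [mul_apply, swap_apply_def]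
    grind

theorem sum_sign_involutionsWithin_eq_zero {a : α} (ha : f (f a) = a) (hfa : f a ≠ a) :
    ∑ σ ∈ involutionsWithin f, (sign σ : ℤ) = 0 :=
  sum_involution (fun σ _ => swap a (f a) * σ)
    (fun σ _ => by simp [Perm.sign_mul, sign_swap hfa.symm])
    (fun σ _ _ h => hfa (swap_mul_eq_iff.mp h).symm)
    (fun _ hσ => swap_mul_mem_involutionsWithin ha hσ)
    (fun σ _ => swap_mul_self_mul _ _ σ)

theorem sum_sign_involutionsWithin (f : α → α) :
    ∑ σ ∈ involutionsWithin f, (sign σ : ℤ) =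
      if ∀ x, f (f x) = x → f x = x then 1 else 0 := by
  split_ifs with hf
  · simp [involutionsWithin_eq_singleton_one hf]
  · push Not at hf
    obtain ⟨a, ha, hfa⟩ := hf
    exact sum_sign_involutionsWithin_eq_zero ha hfa

theorem card_fixedPointFree_extending (σ : Perm α) :
    #{f : α → α | (∀ x, f x ≠ x) ∧ ∀ x, σ x = x ∨ σ x = f x} =
      (Fintype.card α - 1) ^ (Fintype.card α - #σ.support) := by
  have hpi : ({f : α → α | (∀ x, f x ≠ x) ∧ ∀ x, σ x = x ∨ σ x = f x} : Finset (α → α)) =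
      Fintype.piFinset fun x => if x ∈ σ.support then {σ x} else univ.erase x := by
    ext f
    simp only [mem_filter, mem_univ, true_and, Fintype.mem_piFinset, ← forall_and]
    refine forall_congr' fun x => ?_
    by_cases hx : σ x = x <;> grind [mem_support]
  rw [hpi, Fintype.card_piFinset, ← card_compl]
  simp only [apply_ite, card_singleton, card_erase_of_mem (mem_univ _), prod_ite, prod_const_one,
    one_mul, prod_const]
  congr 2
  ext x
  simp

theorem card_antiInvolutive_eq_sum_sign :
    (#{f : α → α | ∀ x, f (f x) ≠ x} : ℤ) =
      ∑ σ : Perm α with σ ^ 2 = 1,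
        (sign σ : ℤ) * ((Fintype.card α - 1 : ℕ) : ℤ) ^ (Fintype.card α - #σ.support) := by
  calc (#{f : α → α | ∀ x, f (f x) ≠ x} : ℤ)
      = ∑ f : α → α with ∀ x, f x ≠ x, ∑ σ ∈ involutionsWithin f, (sign σ : ℤ) := by
        simp only [sum_sign_involutionsWithin, sum_boole, filter_filter]
        congr 3
        ext f
        grind
    _ = ∑ σ : Perm α with σ ^ 2 = 1,
          ∑ f : α → α with (∀ x, f x ≠ x) ∧ ∀ x, σ x = x ∨ σ x = f x, (sign σ : ℤ) :=
        sum_comm' fun f σ => by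
          simp only [mem_filter, mem_univ, true_and, mem_involutionsWithin]
          tauto
    _ = _ := by simp [card_fixedPointFree_extending, mul_comm]

theorem card_antiInvolutive_eq :
    (#{f : α → α | ∀ x, f (f x) ≠ x} : ℤ) =
      ∑ i ∈ range (Fintype.card α / 2 + 1),
        (-1 : ℤ) ^ i * ((Fintype.card α - 1 : ℕ) : ℤ) ^ (Fintype.card α - 2 * i) *
          ((Fintype.card α).choose (2 * i) : ℤ) * (((2 * i)! / (2 ^ i * i !) : ℕ) : ℤ) := by
  rw [card_antiInvolutive_eq_sum_sign, sum_sq_eq_one_eq_sum_cycleType]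
  refine sum_congr rfl fun i _ => ?_
  have hterm : ∀ σ ∈ ({σ : Perm α | σ.cycleType = .replicate i 2} : Finset (Perm α)),
      (sign σ : ℤ) * ((Fintype.card α - 1 : ℕ) : ℤ) ^ (Fintype.card α - #σ.support) =
        (-1) ^ i * ((Fintype.card α - 1 : ℕ) : ℤ) ^ (Fintype.card α - 2 * i) := by
    intro σ hσ
    rw [mem_filter] at hσ
    rw [sign_of_cycleType_eq_replicate_two hσ.2, card_support_of_cycleType_eq_replicate_two hσ.2]
    simp
  rw [sum_congr rfl hterm, sum_const, card_cycleType_eq_replicate_two, nsmul_eq_mul]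
  push_cast
  ring

theorem card_anti_involutive_general (n : ℕ) :
    (Nat.card {f : Fin n → Fin n // ∀ x, f (f x) ≠ x} : ℤ) =
      ∑ i ∈ Finset.range (n / 2 + 1),
        (-1 : ℤ) ^ i * ((n - 1 : ℕ) : ℤ) ^ (n - 2 * i) * (n.choose (2 * i) : ℤ) *
          (((2 * i).factorial / (2 ^ i * i.factorial) : ℕ) : ℤ) := by
  rw [Nat.card_eq_fintype_card, Fintype.card_subtype]
  simpa using card_antiInvolutive_eq (α := Fin n)

/-- For `n ≥ 1`, the number of anti-involutive functions `f : {0,…,n−1} → {0,…,n−1}`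
(i.e. `f(f(x)) ≠ x` for all `x`) equals
`∑_{i=0}^{⌊n/2⌋} (−1)^i (n−1)^(n−2i) C(n,2i) (2i)!/(2^i·i!)`. -/
theorem card_anti_involutive (n : ℕ) (hn : 1 ≤ n) :
    (Nat.card {f : Fin n → Fin n // ∀ x, f (f x) ≠ x} : ℤ) =
      ∑ i ∈ Finset.range (n / 2 + 1),
        (-1 : ℤ) ^ i * ((n - 1 : ℕ) : ℤ) ^ (n - 2 * i) * (n.choose (2 * i) : ℤ) *
          (((2 * i).factorial / (2 ^ i * i.factorial) : ℕ) : ℤ) :=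
  card_anti_involutive_general n
end
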